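/- arXiv:2008.09937 — 2 statements merged into one kernel-verified Lean document; each statement's English description precedes it below -/
import Mathlib

section
/- Let 𝔥 be the 2-dimensional Lie algebra over k with basis {x, y} and bracket [x,y] = x = −[y,x], [x,x] = [y,y] = 0. Let A = k⟨a, c, d⟩/(ad − a, da − a, cd − dc) with comultiplication Δ(a) = a⊗a, Δ(d) = d⊗d, Δ(c) = c⊗a + d⊗c and counit ε(a) = ε(d) = 1, ε(c) = 0. Then A is a bialgebra and the coaction ρ(x) = a⊗x, ρ(y) = c⊗x + d⊗y makes 𝔥 an A-comodule such that the bracket [−,−]: 𝔥⊗𝔥 → 𝔥 is A-colinear. -/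
/-!
`A` is presented by generators and relations, so an algebra map out of `A` exists as soon as
the images of `a, c, d` satisfy `ad = a`, `da = a`, `cd = dc`, and two algebra maps out of `A`
agree once they agree on `a, c, d`. This gives `Δ` and `ε`, and reduces coassociativity and the
counit laws (equalities of algebra maps) to a check on the three generators. The comodule
axioms are linear in `v`, and colinearity of the bracket on the basis is exactly the relations
`ad = a`, `da = a` and `cd = dc`.
-/

open TensorProduct

/-- The defining relations `ad = a`, `da = a`, `cd = dc` of
`A = k⟨a,c,d⟩/(ad−a, da−a, cd−dc)`, with `a = ι 0`, `c = ι 1`, `d = ι 2`. -/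
inductive lieRel (k : Type*) [Field k] : FreeAlgebra k (Fin 3) → FreeAlgebra k (Fin 3) → Prop
  | ad : lieRel k (FreeAlgebra.ι k 0 * FreeAlgebra.ι k 2) (FreeAlgebra.ι k 0)
  | da : lieRel k (FreeAlgebra.ι k 2 * FreeAlgebra.ι k 0) (FreeAlgebra.ι k 0)
  | cd : lieRel k (FreeAlgebra.ι k 1 * FreeAlgebra.ι k 2)
      (FreeAlgebra.ι k 2 * FreeAlgebra.ι k 1)

namespace lieRel

variable {k : Type*} [Field k]

abbrev genA : RingQuot (lieRel k) := RingQuot.mkAlgHom k (lieRel k) (FreeAlgebra.ι k 0)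
abbrev genC : RingQuot (lieRel k) := RingQuot.mkAlgHom k (lieRel k) (FreeAlgebra.ι k 1)
abbrev genD : RingQuot (lieRel k) := RingQuot.mkAlgHom k (lieRel k) (FreeAlgebra.ι k 2)

theorem genA_mul_genD : (genA * genD : RingQuot (lieRel k)) = genA := by
  simpa only [map_mul] using RingQuot.mkAlgHom_rel k lieRel.ad

theorem genD_mul_genA : (genD * genA : RingQuot (lieRel k)) = genA := by
  simpa only [map_mul] using RingQuot.mkAlgHom_rel k lieRel.da

theorem genC_mul_genD : (genC * genD : RingQuot (lieRel k)) = genD * genC := by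
  simpa only [map_mul] using RingQuot.mkAlgHom_rel k lieRel.cd

section Lift

variable {B : Type*} [Semiring B] [Algebra k B]

theorem algHom_ext {f g : RingQuot (lieRel k) →ₐ[k] B}
    (ha : f genA = g genA) (hc : f genC = g genC) (hd : f genD = g genD) : f = g := by
  refine RingQuot.ringQuot_ext' _ _ _ (FreeAlgebra.hom_ext (funext fun i => ?_))
  fin_cases i
  exacts [ha, hc, hd]

variable (k) in
def lift (a c d : B) (had : a * d = a) (hda : d * a = a) (hcd : c * d = d * c) :
    RingQuot (lieRel k) →ₐ[k] B :=
  RingQuot.liftAlgHom k ⟨FreeAlgebra.lift k ![a, c, d], by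
    rintro u v (_ | _ | _) <;> simp [had, hda, hcd]⟩

variable (a c d : B) (had : a * d = a) (hda : d * a = a) (hcd : c * d = d * c)

@[simp] theorem lift_genA : lift k a c d had hda hcd genA = a := by
  simp [lift]

@[simp] theorem lift_genC : lift k a c d had hda hcd genC = c := by
  simp [lift]

@[simp] theorem lift_genD : lift k a c d had hda hcd genD = d := by
  simp [lift]

end Lift

def comul : RingQuot (lieRel k) →ₐ[k] RingQuot (lieRel k) ⊗[k] RingQuot (lieRel k) :=
  lift k (genA ⊗ₜ genA) (genC ⊗ₜ genA + genD ⊗ₜ genC) (genD ⊗ₜ genD)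
    (by simp [genA_mul_genD]) (by simp [genD_mul_genA])
    (by simp [add_mul, mul_add, genA_mul_genD, genD_mul_genA, genC_mul_genD])

def counit : RingQuot (lieRel k) →ₐ[k] k :=
  lift k 1 0 1 (mul_one 1) (one_mul 1) (by simp)

@[simp] theorem comul_genA : comul (genA : RingQuot (lieRel k)) = genA ⊗ₜ genA := lift_genA ..

@[simp] theorem comul_genC :
    comul (genC : RingQuot (lieRel k)) = genC ⊗ₜ genA + genD ⊗ₜ genC := lift_genC ..

@[simp] theorem comul_genD : comul (genD : RingQuot (lieRel k)) = genD ⊗ₜ genD := lift_genD ..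

@[simp] theorem counit_genA : counit (genA : RingQuot (lieRel k)) = 1 := lift_genA ..

@[simp] theorem counit_genC : counit (genC : RingQuot (lieRel k)) = 0 := lift_genC ..

@[simp] theorem counit_genD : counit (genD : RingQuot (lieRel k)) = 1 := lift_genD ..

theorem comul_coassoc :
    (Algebra.TensorProduct.assoc k k k _ _ _).toAlgHom.comp
        ((Algebra.TensorProduct.map comul (AlgHom.id k _)).comp comul)
      = (Algebra.TensorProduct.map (AlgHom.id k (RingQuot (lieRel k))) comul).comp comul := by
  apply algHom_ext <;> simp [tmul_add, add_tmul, add_assoc]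

theorem counit_comul :
    (Algebra.TensorProduct.lid k _).toAlgHom.comp
        ((Algebra.TensorProduct.map counit (AlgHom.id k _)).comp comul)
      = AlgHom.id k (RingQuot (lieRel k)) := by
  apply algHom_ext <;> simp

theorem comul_counit :
    (Algebra.TensorProduct.rid k k _).toAlgHom.comp
        ((Algebra.TensorProduct.map (AlgHom.id k _) counit).comp comul)
      = AlgHom.id k (RingQuot (lieRel k)) := by
  apply algHom_ext <;> simp

def coaction : (k × k) →ₗ[k] RingQuot (lieRel k) ⊗[k] (k × k) :=
  (LinearMap.fst k k k).smulRight (genA ⊗ₜ (1, 0))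
    + (LinearMap.snd k k k).smulRight (genC ⊗ₜ (1, 0) + genD ⊗ₜ (0, 1))

theorem coaction_apply (v : k × k) :
    coaction v = v.1 • genA ⊗ₜ (1, 0) + v.2 • (genC ⊗ₜ (1, 0) + genD ⊗ₜ (0, 1)) := rfl

theorem coaction_one_zero : coaction ((1, 0) : k × k) = genA ⊗ₜ (1, 0) := by
  simp [coaction_apply]

theorem coaction_zero_one : coaction ((0, 1) : k × k) = genC ⊗ₜ (1, 0) + genD ⊗ₜ (0, 1) := by
  simp [coaction_apply]

theorem coaction_coassoc (v : k × k) :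
    TensorProduct.assoc k _ _ _ (TensorProduct.map comul.toLinearMap LinearMap.id (coaction v))
      = TensorProduct.map LinearMap.id coaction (coaction v) := by
  simp only [coaction_apply, smul_add, map_add, map_smul, map_tmul, AlgHom.toLinearMap_apply,
    comul_genA, comul_genC, comul_genD, LinearMap.id_coe, id_eq, add_tmul, assoc_tmul, tmul_add,
    one_smul, zero_smul, add_zero, zero_add]
  abel

theorem coaction_counit (v : k × k) :
    TensorProduct.lid k _ (TensorProduct.map counit.toLinearMap LinearMap.id (coaction v)) = v := by
  ext <;> simp [coaction_apply]

end lieRel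

/-- Let `𝔥 = kx ⊕ ky` (realized as `k × k`, `x = (1,0)`, `y = (0,1)`)
with bracket `[x,y] = x = −[y,x]`, `[x,x] = [y,y] = 0`, and let
`A = k⟨a,c,d⟩/(ad−a, da−a, cd−dc)` with `Δ(a) = a⊗a`, `Δ(c) = c⊗a + d⊗c`,
`Δ(d) = d⊗d`, `ε(a) = ε(d) = 1`, `ε(c) = 0`.  Then `A` is a bialgebra and the
coaction `ρ(x) = a⊗x`, `ρ(y) = c⊗x + d⊗y` makes `𝔥` an `A`-comodule for which the
bracket is `A`-colinear. -/
theorem stmt14 (k : Type*) [Field k]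
    (br : (k × k) →ₗ[k] (k × k) →ₗ[k] (k × k))
    (x y : k × k) (hx : x = (1, 0)) (hy : y = (0, 1))
    (hxx : br x x = 0) (hxy : br x y = x) (hyx : br y x = -x) (hyy : br y y = 0) :
    let A := RingQuot (lieRel k)
    let π := RingQuot.mkAlgHom k (lieRel k)
    let a := π (FreeAlgebra.ι k 0)
    let c := π (FreeAlgebra.ι k 1)
    let d := π (FreeAlgebra.ι k 2)
    ∃ (Δ : A →ₐ[k] A ⊗[k] A) (ε : A →ₐ[k] k) (ρ : (k × k) →ₗ[k] A ⊗[k] (k × k)),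
      -- comultiplication and counit on generators
      Δ a = a ⊗ₜ[k] a ∧ Δ c = c ⊗ₜ[k] a + d ⊗ₜ[k] c ∧ Δ d = d ⊗ₜ[k] d
      ∧ ε a = 1 ∧ ε c = 0 ∧ ε d = 1
      -- bialgebra axioms
      ∧ (∀ z : A, (TensorProduct.assoc k A A A)
            (TensorProduct.map Δ.toLinearMap LinearMap.id (Δ z))
          = TensorProduct.map LinearMap.id Δ.toLinearMap (Δ z))
      ∧ (∀ z : A, (TensorProduct.lid k A)
            (TensorProduct.map ε.toLinearMap LinearMap.id (Δ z)) = z)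
      ∧ (∀ z : A, (TensorProduct.rid k A)
            (TensorProduct.map LinearMap.id ε.toLinearMap (Δ z)) = z)
      -- the coaction and the comodule axioms
      ∧ ρ x = a ⊗ₜ[k] x ∧ ρ y = c ⊗ₜ[k] x + d ⊗ₜ[k] y
      ∧ (∀ v : k × k, (TensorProduct.assoc k A A (k × k))
            (TensorProduct.map Δ.toLinearMap LinearMap.id (ρ v))
          = TensorProduct.map LinearMap.id ρ (ρ v))
      ∧ (∀ v : k × k, (TensorProduct.lid k (k × k))
            (TensorProduct.map ε.toLinearMap LinearMap.id (ρ v)) = v)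
      -- colinearity of the bracket, checked on the basis `x, y` of `𝔥`
      ∧ (a * a) ⊗ₜ[k] br x x = ρ (br x x)
      ∧ (a * c) ⊗ₜ[k] br x x + (a * d) ⊗ₜ[k] br x y = ρ (br x y)
      ∧ (c * a) ⊗ₜ[k] br x x + (d * a) ⊗ₜ[k] br y x = ρ (br y x)
      ∧ (c * c) ⊗ₜ[k] br x x + (c * d) ⊗ₜ[k] br x y
          + (d * c) ⊗ₜ[k] br y x + (d * d) ⊗ₜ[k] br y y = ρ (br y y) := by
  intro A π a c d
  subst hx hy
  refine ⟨lieRel.comul, lieRel.counit, lieRel.coaction, lieRel.comul_genA, lieRel.comul_genC,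
    lieRel.comul_genD, lieRel.counit_genA, lieRel.counit_genC, lieRel.counit_genD,
    AlgHom.congr_fun lieRel.comul_coassoc, AlgHom.congr_fun lieRel.counit_comul,
    AlgHom.congr_fun lieRel.comul_counit, lieRel.coaction_one_zero, lieRel.coaction_zero_one,
    lieRel.coaction_coassoc, lieRel.coaction_counit, ?_, ?_, ?_, ?_⟩
  · rw [hxx, map_zero, tmul_zero]
  · rw [hxx, hxy, tmul_zero, zero_add, lieRel.genA_mul_genD, lieRel.coaction_one_zero]
  · rw [hxx, hyx, tmul_zero, zero_add, lieRel.genD_mul_genA, map_neg, lieRel.coaction_one_zero,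
      tmul_neg]
  · rw [hxx, hxy, hyx, hyy, map_zero, tmul_zero, tmul_zero, tmul_neg, lieRel.genC_mul_genD]
    abel
end

section
/- Let A be a bialgebra over k and V a finite-dimensional left A-comodule with coaction ρ_A(x_i) = Σⱼ aᵢʲ ⊗ xⱼ in a fixed basis {x₁,…,xₙ}. Suppose f: V^{⊗n₁} → V^{⊗n₂} is A-colinear with matrix coefficients f_I^J. Then the elements aᵢʲ satisfy Σ_J a_I^J f_J^K = Σ_J f_I^J a_J^K for all multi-indices I, K, where a_I^J := a_{i₁}^{j₁}⋯a_{iₐ}^{jₐ}; hence the assignment tᵢʲ ↦ aᵢʲ defines a bialgebra homomorphism from the universal bialgebra A(f) = TC/𝕀_f to A. -/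
open TensorProduct

noncomputable def matDelta (k : Type*) [Field k] (n : ℕ) :
    FreeAlgebra k (Fin n × Fin n) →ₐ[k]
      (FreeAlgebra k (Fin n × Fin n) ⊗[k] FreeAlgebra k (Fin n × Fin n)) :=
  FreeAlgebra.lift k
    (fun p => ∑ l : Fin n, (FreeAlgebra.ι k (p.1, l)) ⊗ₜ[k] (FreeAlgebra.ι k (l, p.2)))

noncomputable def matEps (k : Type*) [Field k] (n : ℕ) :
    FreeAlgebra k (Fin n × Fin n) →ₐ[k] k :=
  FreeAlgebra.lift k (fun p => if p.1 = p.2 then (1 : k) else 0)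

noncomputable def tIJ (k : Type*) [Field k] {n a : ℕ} (I J : Fin a → Fin n) :
    FreeAlgebra k (Fin n × Fin n) :=
  (List.ofFn fun s => FreeAlgebra.ι k (I s, J s)).prod

/-- `a_I^J := a_{i₁}^{j₁} ⋯ a_{iₐ}^{jₐ}` in `A`. -/
noncomputable def aIJ (k : Type*) {A : Type*} [Field k] [Ring A] [Algebra k A] {n ℓ : ℕ}
    (a : Fin n → Fin n → A) (I J : Fin ℓ → Fin n) : A :=
  (List.ofFn fun s => a (I s) (J s)).prod

/-!
Reading off the `K`-th coordinate of both sides of the colinearity identity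
`(id ⊗ f) (ρ₁ x_I) = ρ₂ (f x_I)` gives `Σ_J a_I^J f_J^K = Σ_J f_I^J a_J^K`.
The free-algebra lift `tᵢʲ ↦ aᵢʲ` sends `t_I^J` to `a_I^J`, so it kills the generators of `𝕀_f`;
it is a coalgebra map because `Δ_A` and `ε_A` are algebra maps that agree with the matrix
coalgebra structure on the generators `tᵢʲ`.
-/

section MatrixCoefficients

variable {R M ι ι' : Type*} [CommSemiring R] [AddCommMonoid M] [Module R M]
  [Fintype ι] [DecidableEq ι] [Fintype ι'] [DecidableEq ι']

theorem LinearMap.apply_eq_sum_smul_single (g : (ι → R) →ₗ[R] M) (v : ι → R) :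
    g v = ∑ I, v I • g (Pi.single I 1) := by
  conv_lhs => rw [← Finset.univ_sum_single v]
  simp [map_sum, ← map_smul, ← Pi.single_smul]

theorem coeff_mul_eq_mul_coeff_of_colinear
    (c₁ : ι → ι → M) (c₂ : ι' → ι' → M)
    (ρ₁ : (ι → R) →ₗ[R] M ⊗[R] (ι → R)) (ρ₂ : (ι' → R) →ₗ[R] M ⊗[R] (ι' → R))
    (hρ₁ : ∀ I, ρ₁ (Pi.single I 1) = ∑ J, c₁ I J ⊗ₜ[R] Pi.single J 1)
    (hρ₂ : ∀ I, ρ₂ (Pi.single I 1) = ∑ J, c₂ I J ⊗ₜ[R] Pi.single J 1)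
    (f : (ι → R) →ₗ[R] (ι' → R))
    (hcolin : ∀ v, TensorProduct.map LinearMap.id f (ρ₁ v) = ρ₂ (f v)) (I : ι) (K : ι') :
    ∑ J, f (Pi.single J 1) K • c₁ I J = ∑ J, f (Pi.single I 1) J • c₂ J K := by
  have hcoord := congrArg (fun x => piScalarRightHom R R M ι' x K) (hcolin (Pi.single I 1))
  rw [hρ₁, ρ₂.apply_eq_sum_smul_single] at hcoord
  simpa [map_sum, hρ₂, Pi.single_apply] using hcoord

end MatrixCoefficients

section MatrixBialgebra

variable (k : Type*) {A : Type*} [Field k] {n : ℕ}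

noncomputable def matLift [Ring A] [Algebra k A] (a : Fin n → Fin n → A) :
    FreeAlgebra k (Fin n × Fin n) →ₐ[k] A :=
  FreeAlgebra.lift k fun p => a p.1 p.2

@[simp]
theorem matLift_ι [Ring A] [Algebra k A] (a : Fin n → Fin n → A) (i j : Fin n) :
    matLift k a (FreeAlgebra.ι k (i, j)) = a i j := by
  simp [matLift]

theorem matLift_tIJ [Ring A] [Algebra k A] (a : Fin n → Fin n → A) {ℓ : ℕ}
    (I J : Fin ℓ → Fin n) : matLift k a (tIJ k I J) = aIJ k a I J := by
  simp only [tIJ, aIJ, map_list_prod, List.map_ofFn, Function.comp_def, matLift_ι]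

theorem comulAlgHom_comp_matLift [Ring A] [Bialgebra k A] (a : Fin n → Fin n → A)
    (hΔ : ∀ i j, Coalgebra.comul (R := k) (a i j) = ∑ l : Fin n, a i l ⊗ₜ[k] a l j) :
    (Bialgebra.comulAlgHom k A).comp (matLift k a)
      = (Algebra.TensorProduct.map (matLift k a) (matLift k a)).comp (matDelta k n) := by
  refine FreeAlgebra.hom_ext (funext fun ⟨i, j⟩ => ?_)
  simp [matDelta, hΔ]

theorem counitAlgHom_comp_matLift [Ring A] [Bialgebra k A] (a : Fin n → Fin n → A)
    (hε : ∀ i j, Coalgebra.counit (R := k) (a i j) = if i = j then (1 : k) else 0) :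
    (Bialgebra.counitAlgHom k A).comp (matLift k a) = matEps k n := by
  refine FreeAlgebra.hom_ext (funext fun ⟨i, j⟩ => ?_)
  simp [matEps, hε]

end MatrixBialgebra

/-- Let `A` be a bialgebra, `V` an `n`-dimensional `A`-comodule
(modelled on `(Fin n → Fin ℓ) → k` in each tensor power, with diagonal coaction
`ρ_ℓ(x_I) = Σ_J a_I^J ⊗ x_J`), and `f : V^{⊗n₁} → V^{⊗n₂}` an `A`-colinear map.
Then `Σ_J a_I^J f_J^K = Σ_J f_I^J a_J^K` for all multi-indices `I, K`; hence
`tᵢʲ ↦ aᵢʲ` defines a bialgebra homomorphism from the universal bialgebra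
`A(f) = TC/𝕀_f` to `A` (i.e. an algebra map `TC → A` vanishing on the generators
of `𝕀_f` and commuting with comultiplications and counits). -/
theorem stmt18 (k A : Type*) [Field k] [Ring A] [Bialgebra k A]
    (n n₁ n₂ : ℕ) (a : Fin n → Fin n → A)
    (hΔ : ∀ i j, Coalgebra.comul (R := k) (a i j) = ∑ l : Fin n, a i l ⊗ₜ[k] a l j)
    (hε : ∀ i j, Coalgebra.counit (R := k) (a i j) = if i = j then (1 : k) else 0)
    (ρ₁ : ((Fin n₁ → Fin n) → k) →ₗ[k] A ⊗[k] ((Fin n₁ → Fin n) → k))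
    (hρ₁ : ∀ I : Fin n₁ → Fin n,
      ρ₁ ((Pi.single I (1:k))) = ∑ J : Fin n₁ → Fin n, aIJ k a I J ⊗ₜ[k] (Pi.single J (1:k)))
    (ρ₂ : ((Fin n₂ → Fin n) → k) →ₗ[k] A ⊗[k] ((Fin n₂ → Fin n) → k))
    (hρ₂ : ∀ I : Fin n₂ → Fin n,
      ρ₂ ((Pi.single I (1:k))) = ∑ J : Fin n₂ → Fin n, aIJ k a I J ⊗ₜ[k] (Pi.single J (1:k)))
    (f : ((Fin n₁ → Fin n) → k) →ₗ[k] ((Fin n₂ → Fin n) → k))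
    (hcolin : ∀ v, TensorProduct.map LinearMap.id f (ρ₁ v) = ρ₂ (f v)) :
    (∀ (I : Fin n₁ → Fin n) (K : Fin n₂ → Fin n),
        (∑ J : Fin n₁ → Fin n, (f ((Pi.single J (1:k))) K) • aIJ k a I J)
          = ∑ J : Fin n₂ → Fin n, (f ((Pi.single I (1:k))) J) • aIJ k a J K)
    ∧ ∃ φ : FreeAlgebra k (Fin n × Fin n) →ₐ[k] A,
        (∀ i j, φ (FreeAlgebra.ι k (i, j)) = a i j)
        ∧ (∀ (I : Fin n₁ → Fin n) (K : Fin n₂ → Fin n),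
            φ ((∑ J : Fin n₁ → Fin n, (f ((Pi.single J (1:k))) K) • tIJ k I J)
              - ∑ J : Fin n₂ → Fin n, (f ((Pi.single I (1:k))) J) • tIJ k J K) = 0)
        ∧ (∀ z, Coalgebra.comul (R := k) (φ z)
            = TensorProduct.map φ.toLinearMap φ.toLinearMap (matDelta k n z))
        ∧ (∀ z, Coalgebra.counit (R := k) (φ z) = matEps k n z) := by
  have hcoeff := coeff_mul_eq_mul_coeff_of_colinear (aIJ k a) (aIJ k a) ρ₁ ρ₂ hρ₁ hρ₂ f hcolin
  refine ⟨hcoeff, matLift k a, matLift_ι k a, fun I K => ?_, fun z => ?_, fun z => ?_⟩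
  · simp only [map_sub, map_sum, map_smul, matLift_tIJ, sub_eq_zero]
    exact hcoeff I K
  · exact DFunLike.congr_fun (comulAlgHom_comp_matLift k a hΔ) z
  · exact DFunLike.congr_fun (counitAlgHom_comp_matLift k a hε) z
end
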